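/- Let S be a weak Del Pezzo surface of degree 4 admitting four (possibly infinitely near) blown-up points in good position and minimal, inducing a degree-2 conic bundle g, and let f be the degree-1 conic bundle through the fifth point p_{i₅,1}. Then T_f + T_g ≥ −2K_S − 2F₁ − 2F₂ = 2(μ*C_{i₅,1} − μ*C_{i₅,j₅}) ≥ 0 in the pseudo-effective sense; i.e., the sum of relative tangent bundles T_f + T_g is an effective divisor class on S. -/

import Mathlib

/-!
Writing each relative tangent class as `-K - 2F + R`, the excess of `T_f + T_g` over
`-2K - 2F₁ - 2F₂` is the ramification `R(f) + R(g)`, while substituting the fibre classes turns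
`-2K - 2F₁ - 2F₂` into `2(C51 - C5j)`. Both are sums of effective classes.
-/

theorem neg_two_zsmul_sub_fibres_eq {G : Type*} [AddCommGroup G] {H K C₁ C₂ F₁ F₂ : G}
    (hF₁ : F₁ = H - C₁) (hF₂ : F₂ = -K - (H - C₂)) :
    (-(2 : ℤ)) • K - (2 : ℤ) • F₁ - (2 : ℤ) • F₂ = (2 : ℤ) • (C₁ - C₂) := by
  subst hF₁ hF₂
  module

theorem relTangent_add_sub_eq_ramification_add {G : Type*} [AddCommGroup G]
    {K F₁ F₂ Tf Tg Rf Rg : G}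
    (hTf : Tf = -K - (2 : ℤ) • F₁ + Rf) (hTg : Tg = -K - (2 : ℤ) • F₂ + Rg) :
    Tf + Tg - ((-(2 : ℤ)) • K - (2 : ℤ) • F₁ - (2 : ℤ) • F₂) = Rf + Rg := by
  subst hTf hTg
  module

theorem sum_of_relative_tangents_effective_general
    (NS : Type) [AddCommGroup NS]
    (Eff : NS → Prop)
    (heffadd : ∀ x y : NS, Eff x → Eff y → Eff (x + y))
    (H K : NS) (C51 C5j : NS)
    (F₁ F₂ Tf Tg Rf Rg : NS)
    (hF₁ : F₁ = H - C51)
    (hF₂ : F₂ = -K - (H - C5j))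
    (hTf : Tf = -K - (2 : ℤ) • F₁ + Rf)
    (hTg : Tg = -K - (2 : ℤ) • F₂ + Rg)
    (hRf : Eff Rf) (hRg : Eff Rg)
    (hchain : Eff (C51 - C5j)) :
    Eff (Tf + Tg - ((-(2 : ℤ)) • K - (2 : ℤ) • F₁ - (2 : ℤ) • F₂)) ∧
    ((-(2 : ℤ)) • K - (2 : ℤ) • F₁ - (2 : ℤ) • F₂ = (2 : ℤ) • (C51 - C5j)) ∧
    Eff (Tf + Tg) := by
  have hexcess := relTangent_add_sub_eq_ramification_add hTf hTg
  have hbound := neg_two_zsmul_sub_fibres_eq hF₁ hF₂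
  have hram : Eff (Rf + Rg) := heffadd _ _ hRf hRg
  refine ⟨hexcess ▸ hram, hbound, ?_⟩
  have hsum : Tf + Tg = (Rf + Rg) + (C51 - C5j + (C51 - C5j)) := by
    rw [← two_zsmul, ← hbound, ← hexcess, sub_add_cancel]
  exact hsum ▸ heffadd _ _ hram (heffadd _ _ hchain hchain)

theorem sum_of_relative_tangents_effective
    (NS : Type) [AddCommGroup NS]
    (Eff : NS → Prop)
    (heffadd : ∀ x y : NS, Eff x → Eff y → Eff (x + y))
    (H K : NS) (c : Fin 4 → NS) (C51 C5j : NS)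
    (hK : -K = (3 : ℤ) • H - (∑ t, c t) - C5j)
    (F₁ F₂ Tf Tg Rf Rg : NS)
    (hF₁ : F₁ = H - C51)
    (hF₂ : F₂ = -K - (H - C5j))
    (hF₂' : F₂ = (2 : ℤ) • H - ∑ t, c t)
    (hTf : Tf = -K - (2 : ℤ) • F₁ + Rf)
    (hTg : Tg = -K - (2 : ℤ) • F₂ + Rg)
    (hRf : Eff Rf) (hRg : Eff Rg)
    (hchain : Eff (C51 - C5j)) :
    Eff (Tf + Tg - ((-(2 : ℤ)) • K - (2 : ℤ) • F₁ - (2 : ℤ) • F₂)) ∧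
    ((-(2 : ℤ)) • K - (2 : ℤ) • F₁ - (2 : ℤ) • F₂ = (2 : ℤ) • (C51 - C5j)) ∧
    Eff (Tf + Tg) :=
  sum_of_relative_tangents_effective_general NS Eff heffadd H K C51 C5j F₁ F₂ Tf Tg Rf Rg hF₁ hF₂
    hTf hTg hRf hRg hchain
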